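/- Every nonzero finite-dimensional nilpotent Lie algebra N over a field of arbitrary characteristic admits an outer derivation; that is, there exists a derivation D of N such that D ≠ ad_z for every z ∈ N. -/

import Mathlib

/-!
Choose a linear form `g` with `g a = 1` that vanishes on `[N, N]` (possible since `N` is
nilpotent, hence `[N, N] ≠ N`), and let `W` be the centralizer of `ker g`. For `v ∈ W`, the
rank-one map `x ↦ g x • v` is a derivation. The nilpotent map `ad a` preserves `W ≠ 0` (it
contains the centre), so `ad a (W) ⊊ W`; choose `v ∈ W \ ad a (W)`. If `x ↦ g x • v` were
`ad z`, then `z ∈ W` and `v = ⁅z, a⁆ = ad a (-z) ∈ ad a (W)`.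
-/

open LieAlgebra

theorem Submodule.map_lt_of_isNilpotent {R M : Type*} [Semiring R] [AddCommMonoid M]
    [Module R M] {T : Module.End R M} (hT : IsNilpotent T) {W : Submodule R M} (hW : W ≠ ⊥)
    (hTW : W.map T ≤ W) : W.map T < W := by
  refine lt_of_le_of_ne hTW fun hEq => hW ?_
  have hpow : ∀ n : ℕ, W.map (T ^ n) = W := by
    intro n
    induction n with
    | zero => rw [pow_zero, Module.End.one_eq_id, Submodule.map_id]
    | succ n ih => rw [pow_succ', Module.End.mul_eq_comp, Submodule.map_comp, ih, hEq]
  obtain ⟨k, hk⟩ := hT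
  rw [← hpow k, hk, Submodule.map_zero]

namespace LieAlgebra

variable {R L : Type*} [CommRing R] [LieRing L] [LieAlgebra R L]

def centralizer (S : Submodule R L) : Submodule R L where
  carrier := {w | ∀ m ∈ S, ⁅w, m⁆ = 0}
  add_mem' h₁ h₂ m hm := by rw [add_lie, h₁ m hm, h₂ m hm, add_zero]
  zero_mem' m _ := zero_lie m
  smul_mem' c w h m hm := by rw [smul_lie, h m hm, smul_zero]

theorem center_le_centralizer (S : Submodule R L) :
    (center R L).toSubmodule ≤ centralizer S := fun w hw m _ => by
  rw [← lie_skew, (LieSubmodule.mem_toSubmodule _).mp hw m, neg_zero]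

theorem map_toEnd_centralizer_le {S : Submodule R L} {a : L} (hS : ∀ m ∈ S, ⁅a, m⁆ ∈ S) :
    (centralizer S).map (LieModule.toEnd R L L a) ≤ centralizer S := by
  rintro _ ⟨w, hw, rfl⟩ m hm
  rw [LieModule.toEnd_apply_apply, lie_lie, hw m hm, hw _ (hS m hm), lie_zero, sub_zero]

theorem smul_lie_eq_smul_lie_of_mem_centralizer_ker {g : Module.Dual R L} {v : L}
    (hv : v ∈ centralizer (LinearMap.ker g)) (x y : L) :
    g x • ⁅v, y⁆ = g y • ⁅v, x⁆ := by
  have hker : g x • y - g y • x ∈ LinearMap.ker g := by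
    rw [LinearMap.mem_ker, map_sub, map_smul, map_smul, smul_eq_mul, smul_eq_mul, mul_comm,
      sub_self]
  rw [← sub_eq_zero, ← lie_smul, ← lie_smul, ← lie_sub]
  exact hv _ hker

end LieAlgebra

namespace LieDerivation

variable {R L : Type*} [CommRing R] [LieRing L] [LieAlgebra R L]

def smulRight (g : Module.Dual R L) (hg : ∀ x y : L, g ⁅x, y⁆ = 0) (v : L)
    (hv : v ∈ centralizer (LinearMap.ker g)) : LieDerivation R L L where
  toLinearMap := g.smulRight v
  leibniz' x y := by
    simp only [LinearMap.smulRight_apply]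
    rw [hg, zero_smul, lie_smul, lie_smul, ← lie_skew x v, ← lie_skew y v, smul_neg, smul_neg,
      smul_lie_eq_smul_lie_of_mem_centralizer_ker hv x y, sub_self]

@[simp]
theorem smulRight_apply (g : Module.Dual R L) (hg : ∀ x y : L, g ⁅x, y⁆ = 0) (v : L)
    (hv : v ∈ centralizer (LinearMap.ker g)) (x : L) : smulRight g hg v hv x = g x • v :=
  rfl

theorem lie_eq_smul_of_smulRight_eq_ad {g : Module.Dual R L} {hg : ∀ x y : L, g ⁅x, y⁆ = 0}
    {v : L} {hv : v ∈ centralizer (LinearMap.ker g)} {z : L} (h : smulRight g hg v hv = ad R L z)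
    (m : L) : ⁅z, m⁆ = g m • v := by
  rw [← smulRight_apply g hg v hv, h]
  simp

end LieDerivation

theorem LieAlgebra.exists_dual_eq_one_forall_lie_eq_zero (K L : Type*) [Field K] [LieRing L]
    [LieAlgebra K L] [IsSolvable L] [Nontrivial L] :
    ∃ (g : Module.Dual K L) (a : L), g a = 1 ∧ ∀ x y : L, g ⁅x, y⁆ = 0 := by
  obtain ⟨a, -, ha⟩ := SetLike.exists_of_lt (derivedSeries_lt_top_of_solvable K L)
  obtain ⟨f, hfa, hf⟩ :=
    (derivedSeries K L 1).toSubmodule.exists_dual_map_eq_bot_of_notMem ha inferInstance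
  refine ⟨(f a)⁻¹ • f, a, inv_mul_cancel₀ hfa, fun x y => ?_⟩
  have hxy : f ⁅x, y⁆ ∈ (derivedSeries K L 1).toSubmodule.map f :=
    Submodule.mem_map_of_mem <|
      LieSubmodule.lie_mem_lie (LieSubmodule.mem_top x) (LieSubmodule.mem_top y)
  rw [hf, Submodule.mem_bot] at hxy
  rw [LinearMap.smul_apply, hxy, smul_zero]

theorem stmt_3_general {K N : Type*} [Field K] [LieRing N] [LieAlgebra K N]
    [Nontrivial N] [LieRing.IsNilpotent N] :
    ∃ D : LieDerivation K N N, ∀ z : N, D ≠ LieDerivation.ad K N z := by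
  obtain ⟨g, a, hga, hg⟩ := exists_dual_eq_one_forall_lie_eq_zero K N
  set W := centralizer (LinearMap.ker g)
  set T := LieModule.toEnd K N N a
  have hW : W ≠ ⊥ := by
    have := non_trivial_center_of_isNilpotent (R := K) (L := N)
    obtain ⟨c, hc⟩ := exists_ne (0 : center K N)
    exact Submodule.ne_bot_iff _ |>.mpr ⟨c, center_le_centralizer _ c.2, by simpa using hc⟩
  have hTW : W.map T < W := by
    refine Submodule.map_lt_of_isNilpotent (LieModule.isNilpotent_toEnd_of_isNilpotent K N N a)
      hW (map_toEnd_centralizer_le fun m hm => ?_)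
    rw [LinearMap.mem_ker, hg]
  obtain ⟨v, hvW, hvT⟩ := SetLike.exists_of_lt hTW
  refine ⟨LieDerivation.smulRight g hg v hvW, fun z hz => hvT ?_⟩
  have hzW : z ∈ W := fun m hm => by
    rw [LieDerivation.lie_eq_smul_of_smulRight_eq_ad hz, LinearMap.mem_ker.mp hm, zero_smul]
  have hv : T (-z) = v := by
    rw [LieModule.toEnd_apply_apply, lie_neg, ← lie_skew,
      LieDerivation.lie_eq_smul_of_smulRight_eq_ad hz, hga, one_smul, neg_neg]
  exact ⟨-z, W.neg_mem hzW, hv⟩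

/-- Every nonzero finite-dimensional nilpotent Lie algebra over a field (of arbitrary
characteristic) admits an outer derivation. -/
theorem stmt_3 {K N : Type*} [Field K] [LieRing N] [LieAlgebra K N]
    [Module.Finite K N] [Nontrivial N] [LieRing.IsNilpotent N] :
    ∃ D : LieDerivation K N N, ∀ z : N, D ≠ LieDerivation.ad K N z :=
  stmt_3_general
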